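/- arXiv:2510.04990 — 2 statements merged into one kernel-verified Lean document; each statement's English description precedes it below -/
import Mathlib

section
/- Let D be a loopless digon-free digraph on n vertices, let 2 ≤ k ≤ min{l,n}, and let α and β be acyclic l-colorings of D such that β has k color classes each of size exactly 1, say C_1^β,…,C_k^β, and α(u) = β(u) for every vertex u not in C_1^β ∪ ⋯ ∪ C_k^β. Then α can be transformed into β by at most k single-vertex recolorings, each intermediate coloring being an acyclic l-coloring (equivalently, d(α,β) ≤ k in the dicoloring graph). -/
/-- A set `S` of vertices induces an acyclic subdigraph of the digraph with
arc relation `A`: there is no directed cycle within `S`. -/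
def AcyclicOn {V : Type*} (A : V → V → Prop) (S : Set V) : Prop :=
  ∀ v, ¬ Relation.TransGen (fun x y => x ∈ S ∧ y ∈ S ∧ A x y) v v

/-- An acyclic `k`-coloring: every color class induces an acyclic subdigraph. -/
def IsAcyclicColoring {V : Type*} (A : V → V → Prop) (k : ℕ) (α : V → Fin k) : Prop :=
  ∀ c : Fin k, AcyclicOn A {v | α v = c}

/-- The `k`-dicoloring graph: vertices are acyclic `k`-colorings, two colorings
adjacent when they differ on exactly one vertex. -/
def DicolGraph {V : Type*} (A : V → V → Prop) (k : ℕ) :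
    SimpleGraph {α : V → Fin k // IsAcyclicColoring A k α} where
  Adj α β := ∃! v, α.1 v ≠ β.1 v
  symm := by
    constructor
    rintro α β ⟨v, hv, hu⟩
    exact ⟨v, Ne.symm hv, fun w hw => hu w (Ne.symm hw)⟩
  loopless := by
    constructor
    rintro α ⟨v, hv, -⟩
    exact hv rfl

/-- The cyclic circulant tournament on `ZMod (2n+1)` with jumps `1,…,n`. -/
def CycArc (n : ℕ) (a b : ZMod (2*n+1)) : Prop := (b - a).val ∈ Finset.Icc 1 n

/-- The tournament obtained from `CycArc n` by reversing the jump `n`. -/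
def RevArc (n : ℕ) (a b : ZMod (2*n+1)) : Prop :=
  (b - a).val ∈ Finset.Icc 1 (n-1) ∨ (b - a).val = n + 1

/-- A forbidden triangle in `C_{2n+1}⟨n⟩`. -/
def ForbiddenTriangle (n : ℕ) (S : Set (ZMod (2*n+1))) : Prop :=
  ∃ i : ZMod (2*n+1), S = {i, i + n, i + n + 1}

/-!
Recolor the vertices of `U`, the union of the singleton classes of `β`, one at a time from their
`α`-colour to their `β`-colour. When the vertices of `T ⊆ U` still carry their `α`-colour, the
class of `β w` after recolouring `w ∈ T` consists of `w` and the vertices of `T` whose `α`-colour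
is `β w`. Since `β` is injective on `U`, these counts sum to at most `#T` over `w ∈ T`, so some `w`
has count at most one; its new class has at most two vertices and is acyclic because the digraph
is digon-free.
-/

open Finset

section

variable {V : Type*} {A : V → V → Prop} {l : ℕ}

lemma AcyclicOn.mono {S T : Set V} (hT : AcyclicOn A T) (h : S ⊆ T) : AcyclicOn A S :=
  fun v hv => hT v (Relation.TransGen.mono (fun _ _ ⟨hx, hy, ha⟩ => ⟨h hx, h hy, ha⟩) v v hv)

lemma IsAcyclicColoring.irrefl {α : V → Fin l} (hα : IsAcyclicColoring A l α) (v : V) :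
    ¬ A v v :=
  fun h => hα (α v) v (.single ⟨rfl, rfl, h⟩)

lemma acyclicOn_pair (hloop : ∀ v, ¬ A v v) (hdigon : ∀ u v, A u v → ¬ A v u) (a b : V) :
    AcyclicOn A {a, b} := by
  set R := fun x y => x ∈ ({a, b} : Set V) ∧ y ∈ ({a, b} : Set V) ∧ A x y
  -- A step inside `{a, b}` swaps `a` and `b`, so two consecutive steps would form a digon.
  have h_single : ∀ x y, Relation.TransGen R x y → R x y := by
    intro x y h
    induction h with
    | single h => exact h
    | @tail y z _ hyz ih =>
      obtain ⟨hx, hy, hxy⟩ := ih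
      obtain ⟨-, hz, hyz⟩ := hyz
      have hxz : x = z := by
        rcases hx with rfl | rfl <;> rcases hy with rfl | rfl <;> rcases hz with rfl | rfl <;>
          simp_all
      exact absurd (hxz ▸ hyz) (hdigon x y hxy)
  exact fun v hv => hloop v (h_single v v hv).2.2

lemma IsAcyclicColoring.of_forall_ne {γ δ : V → Fin l} (hγ : IsAcyclicColoring A l γ) {w : V}
    (h : ∀ u ≠ w, δ u = γ u) (hw : AcyclicOn A {u | δ u = δ w}) : IsAcyclicColoring A l δ := by
  intro c
  by_cases hc : c = δ w
  · exact hc ▸ hw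
  · refine (hγ c).mono fun u hu => ?_
    have huw : u ≠ w := by rintro rfl; exact hc hu.symm
    simpa [← h u huw] using hu

lemma Finset.exists_card_filter_eq_le_one {ι κ : Type*} [DecidableEq κ] {T : Finset ι}
    (hT : T.Nonempty) (f g : ι → κ) (hg : Set.InjOn g T) :
    ∃ w ∈ T, #{u ∈ T | f u = g w} ≤ 1 := by
  classical
  refine exists_le_of_sum_le hT ?_
  calc ∑ w ∈ T, #{u ∈ T | f u = g w}
      = ∑ c ∈ T.image g, #{u ∈ T | f u = c} :=
        (sum_image (f := fun c => #{u ∈ T | f u = c}) hg).symm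
    _ = #{u ∈ T | f u ∈ T.image g} := sum_card_fiberwise_eq_card_filter _ _ _
    _ ≤ ∑ _w ∈ T, 1 := by simpa using card_filter_le _ _

lemma DicolGraph.exists_walk_length_le_one {γ δ : {α : V → Fin l // IsAcyclicColoring A l α}}
    (w : V) (h : ∀ u ≠ w, γ.1 u = δ.1 u) : ∃ p : (DicolGraph A l).Walk γ δ, p.length ≤ 1 := by
  by_cases hw : γ.1 w = δ.1 w
  · obtain rfl : γ = δ := Subtype.ext <| funext fun u => by
      by_cases hu : u = w
      · exact hu ▸ hw
      · exact h u hu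
    exact ⟨.nil, by simp⟩
  · have hadj : (DicolGraph A l).Adj γ δ :=
      ⟨w, hw, fun u hu => by_contra fun huw => hu (h u huw)⟩
    exact ⟨hadj.toWalk, by simp⟩

lemma DicolGraph.exists_walk_piecewise [DecidableEq V] {α β : V → Fin l}
    (hβ : IsAcyclicColoring A l β) (S : Finset V)
    (hstep : ∀ T ⊆ S, T.Nonempty → IsAcyclicColoring A l (T.piecewise α β) →
      ∃ w ∈ T, IsAcyclicColoring A l ((T.erase w).piecewise α β))
    (γ : {α : V → Fin l // IsAcyclicColoring A l α}) (hγ : γ.1 = S.piecewise α β) :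
    ∃ p : (DicolGraph A l).Walk γ ⟨β, hβ⟩, p.length ≤ #S := by
  induction S using Finset.strongInduction generalizing γ with
  | H S ih =>
    obtain rfl | hS := S.eq_empty_or_nonempty
    · obtain rfl : γ = ⟨β, hβ⟩ := Subtype.ext (by simp [hγ])
      exact ⟨.nil, by simp⟩
    obtain ⟨w, hw, hγ'⟩ := hstep S subset_rfl hS (hγ ▸ γ.2)
    obtain ⟨q, hq⟩ := ih (S.erase w) (erase_ssubset hw)
      (fun T hT => hstep T (hT.trans (erase_subset w S))) ⟨_, hγ'⟩ rfl
    obtain ⟨p, hp⟩ := DicolGraph.exists_walk_length_le_one (γ := γ) (δ := ⟨_, hγ'⟩) w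
      fun u hu => by simp [hγ, piecewise, hu]
    refine ⟨p.append q, ?_⟩
    have := card_erase_add_one hw
    rw [SimpleGraph.Walk.length_append]
    omega

lemma exists_isAcyclicColoring_piecewise_erase [DecidableEq V] (hloop : ∀ v, ¬ A v v)
    (hdigon : ∀ u v, A u v → ¬ A v u) {α β : V → Fin l} {T : Finset V} (hT : T.Nonempty)
    (hβT : ∀ u ∈ T, ∀ w, β w = β u → w = u) (hγ : IsAcyclicColoring A l (T.piecewise α β)) :
    ∃ w ∈ T, IsAcyclicColoring A l ((T.erase w).piecewise α β) := by
  obtain ⟨w, hw, hcard⟩ :=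
    T.exists_card_filter_eq_le_one hT α β fun u hu v _ huv => (hβT u hu v huv.symm).symm
  have : Nonempty V := ⟨w⟩
  obtain ⟨u₀, hu₀⟩ := card_le_one_iff_subset_singleton.mp hcard
  refine ⟨w, hw, hγ.of_forall_ne (w := w) (fun u hu => by simp [piecewise, hu]) ?_⟩
  refine (acyclicOn_pair hloop hdigon w u₀).mono fun u (hu : _ = _) => ?_
  rw [piecewise_eq_of_notMem _ _ _ (notMem_erase w T)] at hu
  by_cases hu' : u ∈ T.erase w
  · rw [piecewise_eq_of_mem _ _ _ hu'] at hu
    exact .inr (mem_singleton.mp (hu₀ (mem_filter.mpr ⟨mem_of_mem_erase hu', hu⟩)))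
  · rw [piecewise_eq_of_notMem _ _ _ hu'] at hu
    exact .inl (hβT w hw u hu)

end

theorem stmt1_general {V : Type*} [Fintype V]
    (A : V → V → Prop) (hdigon : ∀ u v, A u v → ¬ A v u)
    (k l : ℕ)
    (α β : V → Fin l)
    (hα : IsAcyclicColoring A l α) (hβ : IsAcyclicColoring A l β)
    (C : Fin k → Fin l)
    (hsing : ∀ i : Fin k, Set.ncard {v | β v = C i} = 1)
    (hagree : ∀ u : V, (∀ i : Fin k, β u ≠ C i) → α u = β u) :
    (DicolGraph A l).Reachable ⟨α, hα⟩ ⟨β, hβ⟩ ∧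
      (DicolGraph A l).dist ⟨α, hα⟩ ⟨β, hβ⟩ ≤ k := by
  classical
  set U : Finset V := {u | ∃ i, β u = C i}
  have hunique : ∀ u ∈ U, ∀ w, β w = β u → w = u := by
    intro u hu w hw
    obtain ⟨i, hi⟩ := (mem_filter.mp hu).2
    exact (Set.ncard_le_one_iff).mp (hsing i).le (show β w = C i from hw.trans hi) hi
  have hUk : #U ≤ k := calc
    #U ≤ #(univ.image C) := card_le_card_of_injOn β (fun u hu => by
        obtain ⟨i, hi⟩ := (mem_filter.mp hu).2; simp [hi])
      fun u hu w _ huw => (hunique u hu w huw.symm).symm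
    _ ≤ k := card_image_le.trans_eq (card_fin k)
  have hαU : α = U.piecewise α β := funext fun u => by
    by_cases hu : u ∈ U
    · simp [hu]
    · rw [piecewise_eq_of_notMem _ _ _ hu]
      exact hagree u fun i hi => hu (by simp [U, hi])
  obtain ⟨p, hp⟩ := DicolGraph.exists_walk_piecewise hβ U
    (fun T hTU hT => exists_isAcyclicColoring_piecewise_erase hα.irrefl hdigon hT
      fun u hu => hunique u (hTU hu)) ⟨α, hα⟩ hαU
  exact ⟨⟨p⟩, (SimpleGraph.dist_le p).trans (hp.trans hUk)⟩

theorem stmt1 {V : Type*} [Fintype V] (n : ℕ) (hcard : Fintype.card V = n)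
    (A : V → V → Prop) (hloop : ∀ v, ¬ A v v) (hdigon : ∀ u v, A u v → ¬ A v u)
    (k l : ℕ) (hk2 : 2 ≤ k) (hkl : k ≤ l) (hkn : k ≤ n)
    (α β : V → Fin l)
    (hα : IsAcyclicColoring A l α) (hβ : IsAcyclicColoring A l β)
    (C : Fin k → Fin l) (hCinj : Function.Injective C)
    (hsing : ∀ i : Fin k, Set.ncard {v | β v = C i} = 1)
    (hagree : ∀ u : V, (∀ i : Fin k, β u ≠ C i) → α u = β u) :
    (DicolGraph A l).Reachable ⟨α, hα⟩ ⟨β, hβ⟩ ∧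
      (DicolGraph A l).dist ⟨α, hα⟩ ⟨β, hβ⟩ ≤ k :=
  stmt1_general A hdigon k l α β hα hβ C hsing hagree
end

section
/- Let n ≥ 1 and let w, x, y be three distinct vertices of the cyclic circulant tournament C⃗_{2n+1}(1,2,…,n) such that {w,x,y} is not contained in any interval {a, a+1, …, a+n} of Z_{2n+1}. Then {w,x,y} induces a directed triangle (a directed 3-cycle) in C⃗_{2n+1}(1,2,…,n). -/
/-! `CycArc n` is a tournament: for `c ≠ 0` in `ZMod (2n+1)`, `c.val + (-c).val = 2n+1`, so
one of them lies in `[1, n]`. A triple of a tournament that is not a directed triangle has a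
source `s`, and then the whole triple lies in the interval `{s, s+1, …, s+n}`. -/

lemma cyclic_or_exists_source {α : Type*} {R : α → α → Prop} {w x y : α}
    (hwx : R w x ∨ R x w) (hxy : R x y ∨ R y x) (hwy : R w y ∨ R y w) :
    (R w x ∧ R x y ∧ R y w) ∨ (R w y ∧ R y x ∧ R x w) ∨
      ∃ s, ∀ t ∈ ({w, x, y} : Set α), t = s ∨ R s t := by
  rcases hwx with hwx | hxw <;> rcases hxy with hxy | hyx <;> rcases hwy with hwy | hyw
  · exact .inr (.inr ⟨w, by simp [hwx, hwy]⟩)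
  · exact .inl ⟨hwx, hxy, hyw⟩
  · exact .inr (.inr ⟨w, by simp [hwx, hwy]⟩)
  · exact .inr (.inr ⟨y, by simp [hyx, hyw]⟩)
  · exact .inr (.inr ⟨x, by simp [hxw, hxy]⟩)
  · exact .inr (.inr ⟨x, by simp [hxw, hxy]⟩)
  · exact .inr (.inl ⟨hwy, hyx, hxw⟩)
  · exact .inr (.inr ⟨y, by simp [hyx, hyw]⟩)

lemma ZMod.val_mem_Icc_or_neg_val_mem_Icc {n : ℕ} {c : ZMod (2 * n + 1)} (hc : c ≠ 0) :
    c.val ∈ Finset.Icc 1 n ∨ (-c).val ∈ Finset.Icc 1 n := by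
  have hc_val : c.val ≠ 0 := (ZMod.val_ne_zero c).mpr hc
  have := c.val_lt
  rw [Finset.mem_Icc, Finset.mem_Icc, ZMod.neg_val, if_neg hc]
  omega

lemma CycArc.val_sub_le {n : ℕ} {a b : ZMod (2 * n + 1)} (h : CycArc n a b) :
    (b - a).val ≤ n :=
  (Finset.mem_Icc.mp h).2

lemma cycArc_or_cycArc {n : ℕ} {a b : ZMod (2 * n + 1)} (hab : a ≠ b) :
    CycArc n a b ∨ CycArc n b a := by
  simpa [CycArc] using ZMod.val_mem_Icc_or_neg_val_mem_Icc (sub_ne_zero.mpr hab.symm)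

theorem stmt6_general (n : ℕ) (w x y : ZMod (2*n+1))
    (hwx : w ≠ x) (hwy : w ≠ y) (hxy : x ≠ y)
    (h : ¬ ∃ a : ZMod (2*n+1), ({w, x, y} : Set (ZMod (2*n+1))) ⊆ {v | (v - a).val ≤ n}) :
    (CycArc n w x ∧ CycArc n x y ∧ CycArc n y w) ∨
    (CycArc n w y ∧ CycArc n y x ∧ CycArc n x w) := by
  rcases cyclic_or_exists_source (cycArc_or_cycArc hwx) (cycArc_or_cycArc hxy)
      (cycArc_or_cycArc hwy) with hcyc | hcyc | ⟨s, hs⟩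
  · exact Or.inl hcyc
  · exact Or.inr hcyc
  · refine absurd ⟨s, fun t ht => ?_⟩ h
    rcases hs t ht with rfl | hst
    · simp
    · exact hst.val_sub_le

theorem stmt6 (n : ℕ) (hn : 1 ≤ n) (w x y : ZMod (2*n+1))
    (hwx : w ≠ x) (hwy : w ≠ y) (hxy : x ≠ y)
    (h : ¬ ∃ a : ZMod (2*n+1), ({w, x, y} : Set (ZMod (2*n+1))) ⊆ {v | (v - a).val ≤ n}) :
    (CycArc n w x ∧ CycArc n x y ∧ CycArc n y w) ∨
    (CycArc n w y ∧ CycArc n y x ∧ CycArc n x w) :=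
  stmt6_general n w x y hwx hwy hxy h
end
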